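/- Let π̃^p ∈ 𝒫^p and define P̃^fd(F|K) := ∫ σ(F|H_i) π̃^p(dH_i|K) (Stieltjes integral with respect to the finitely additive probability π̃^p(·|K) on 𝒜_ℒ) for F ∈ 𝒜 and K ∈ 𝒜_ℒ⁰. Then P̃^fd is a conditional probability on 𝒜 × 𝒜_ℒ⁰, i.e., (C1) P̃^fd(E|H) = P̃^fd(E∩H|H), (C2) P̃^fd(·|H) is a finitely additive probability on 𝒜 for every H ∈ 𝒜_ℒ⁰, and (C3) P̃^fd(E∩F|H) = P̃^fd(E|H)·P̃^fd(F|E∩H) whenever H and E∩H are in 𝒜_ℒ⁰; moreover P̃^fd(F|Ω) = P^d(F) for all F ∈ 𝒜, P̃^fd(F|H_i) = σ(F|H_i) for all F ∈ 𝒜 and H_i ∈ ℒ, and P̃^fd(B|K) = π̃^p(B|K) for all B ∈ 𝒜_ℒ and K ∈ 𝒜_ℒ⁰. -/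

import Mathlib

open Set

open scoped Classical

variable {Ω : Type*}

/-- A field of sets on `Ω`: contains `univ`, closed under complements and finite unions. -/
def IsSetField (𝒜 : Set (Set Ω)) : Prop :=
  Set.univ ∈ 𝒜 ∧ (∀ A ∈ 𝒜, Aᶜ ∈ 𝒜) ∧ ∀ A ∈ 𝒜, ∀ B ∈ 𝒜, A ∪ B ∈ 𝒜

/-- A finitely additive probability on the field `𝒜`. -/
def IsFAP (𝒜 : Set (Set Ω)) (P : Set Ω → ℝ) : Prop :=
  (∀ A ∈ 𝒜, 0 ≤ P A ∧ P A ≤ 1) ∧ P Set.univ = 1 ∧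
    ∀ A ∈ 𝒜, ∀ B ∈ 𝒜, Disjoint A B → P (A ∪ B) = P A + P B

/-- A partition of `Ω` into nonempty pairwise disjoint pieces. -/
def IsPartition {ι : Type*} (H : ι → Set Ω) : Prop :=
  (∀ i, (H i).Nonempty) ∧ (Pairwise fun i j => Disjoint (H i) (H j)) ∧
    (⋃ i, H i) = Set.univ

/-- A field containing every member of the partition `H` and whose members are
unions of members of the partition. -/
def IsFieldOver {ι : Type*} (H : ι → Set Ω) (𝒜L : Set (Set Ω)) : Prop :=
  IsSetField 𝒜L ∧ (∀ i, H i ∈ 𝒜L) ∧ ∀ A ∈ 𝒜L, ∃ S : Set ι, A = ⋃ i ∈ S, H i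

/-- A field containing `𝒜L ∪ 𝒜E` whose members are unions of the atoms `H i ∩ E j`. -/
def IsJointField {ι κ : Type*} (H : ι → Set Ω) (E : κ → Set Ω)
    (𝒜L 𝒜E 𝒜 : Set (Set Ω)) : Prop :=
  IsSetField 𝒜 ∧ 𝒜L ⊆ 𝒜 ∧ 𝒜E ⊆ 𝒜 ∧
    ∀ A ∈ 𝒜, ∃ S : Set (ι × κ), A = ⋃ p ∈ S, H p.1 ∩ E p.2

/-- A strategy on `𝒜 × ℒ`: each `σ (·|H i)` is a finitely additive probability on `𝒜`
equal to `1` on events implied by `H i`. -/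
def IsStrategy {ι : Type*} (𝒜 : Set (Set Ω)) (H : ι → Set Ω) (σ : Set Ω → ι → ℝ) : Prop :=
  ∀ i, IsFAP 𝒜 (fun F => σ F i) ∧ ∀ F ∈ 𝒜, H i ⊆ F → σ F i = 1

/-- A full conditional probability on the field `𝒜` (conditions (C1), (C2), (C3)). -/
def IsFCP (𝒜 : Set (Set Ω)) (P : Set Ω → Set Ω → ℝ) : Prop :=
  (∀ E ∈ 𝒜, ∀ K ∈ 𝒜, K.Nonempty → P E K = P (E ∩ K) K) ∧
  (∀ K ∈ 𝒜, K.Nonempty → IsFAP 𝒜 fun E => P E K) ∧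
  ∀ E ∈ 𝒜, ∀ F ∈ 𝒜, ∀ K ∈ 𝒜, K.Nonempty → (E ∩ K).Nonempty →
    P (E ∩ F) K = P E K * P F (E ∩ K)

/-- `P` extends the prior `π` on `𝒜L` and the strategy `σ` on `𝒜 × ℒ`. -/
def ExtendsPriorStrategy {ι : Type*} (𝒜 𝒜L : Set (Set Ω)) (H : ι → Set Ω)
    (π : Set Ω → ℝ) (σ : Set Ω → ι → ℝ) (P : Set Ω → Set Ω → ℝ) : Prop :=
  (∀ B ∈ 𝒜L, P B Set.univ = π B) ∧ ∀ F ∈ 𝒜, ∀ i, P F (H i) = σ F i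

/-- The set `𝒫` of full conditional probabilities on `𝒜` extending `{π, σ}`. -/
def FCPSet {ι : Type*} (𝒜 𝒜L : Set (Set Ω)) (H : ι → Set Ω)
    (π : Set Ω → ℝ) (σ : Set Ω → ι → ℝ) : Set (Set Ω → Set Ω → ℝ) :=
  {P | IsFCP 𝒜 P ∧ ExtendsPriorStrategy 𝒜 𝒜L H π σ P}

/-- Lower envelope of a set of conditional probabilities at `F|K`. -/
noncomputable def lowEnv (Ps : Set (Set Ω → Set Ω → ℝ)) (F K : Set Ω) : ℝ :=
  sInf ((fun P => P F K) '' Ps)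

/-- Upper envelope of a set of conditional probabilities at `F|K`. -/
noncomputable def upEnv (Ps : Set (Set Ω → Set Ω → ℝ)) (F K : Set Ω) : ℝ :=
  sSup ((fun P => P F K) '' Ps)

/-- A finite partition of `Ω` contained in `𝒜L`. -/
def IsFinPart (𝒜L : Set (Set Ω)) (T : Finset (Set Ω)) : Prop :=
  (↑T : Set (Set Ω)) ⊆ 𝒜L ∧ (∀ A ∈ T, (A : Set Ω).Nonempty) ∧
    (∀ A ∈ T, ∀ B ∈ T, A ≠ B → Disjoint A B) ∧ ⋃₀ (↑T : Set (Set Ω)) = Set.univ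

/-- Lower Stieltjes integral of `X : ℒ → ℝ` with respect to `μ` on `𝒜L`. -/
noncomputable def lowerSInt {ι : Type*} (H : ι → Set Ω) (𝒜L : Set (Set Ω))
    (X : ι → ℝ) (μ : Set Ω → ℝ) : ℝ :=
  sSup {x | ∃ T : Finset (Set Ω), IsFinPart 𝒜L T ∧
    x = ∑ A ∈ T, sInf {y | ∃ i, H i ⊆ A ∧ y = X i} * μ A}

/-- Upper Stieltjes integral of `X : ℒ → ℝ` with respect to `μ` on `𝒜L`. -/
noncomputable def upperSInt {ι : Type*} (H : ι → Set Ω) (𝒜L : Set (Set Ω))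
    (X : ι → ℝ) (μ : Set Ω → ℝ) : ℝ :=
  sInf {x | ∃ T : Finset (Set Ω), IsFinPart 𝒜L T ∧
    x = ∑ A ∈ T, sSup {y | ∃ i, H i ⊆ A ∧ y = X i} * μ A}

/-- `𝒜L`-continuity of a bounded function `X : ℒ → ℝ`. -/
def ALContinuous {ι : Type*} (H : ι → Set Ω) (𝒜L : Set (Set Ω)) (X : ι → ℝ) : Prop :=
  (∃ M : ℝ, ∀ i, |X i| ≤ M) ∧ ∀ t : ℝ, ∀ ε > (0 : ℝ), ∃ A ∈ 𝒜L,
    (⋃ i ∈ {i | t + ε ≤ X i}, H i) ⊆ A ∧ A ⊆ ⋃ i ∈ {i | t ≤ X i}, H i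

/-- Countable additivity of `P` on the field `𝒜`. -/
def CountablyAdditiveOn (𝒜 : Set (Set Ω)) (P : Set Ω → ℝ) : Prop :=
  ∀ A : ℕ → Set Ω, (∀ n, A n ∈ 𝒜) → (Pairwise fun m n => Disjoint (A m) (A n)) →
    (⋃ n, A n) ∈ 𝒜 → HasSum (fun n => P (A n)) (P (⋃ n, A n))

/-- A (normalized) capacity on the field `𝒜`. -/
def IsCapacity (𝒜 : Set (Set Ω)) (φ : Set Ω → ℝ) : Prop :=
  φ ∅ = 0 ∧ φ Set.univ = 1 ∧ (∀ A ∈ 𝒜, 0 ≤ φ A ∧ φ A ≤ 1) ∧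
    ∀ A ∈ 𝒜, ∀ B ∈ 𝒜, A ⊆ B → φ A ≤ φ B

/-- Total monotonicity of a capacity `φ` on the field `𝒜`. -/
def TotallyMonotone (𝒜 : Set (Set Ω)) (φ : Set Ω → ℝ) : Prop :=
  ∀ n : ℕ, 2 ≤ n → ∀ A : Fin n → Set Ω, (∀ i, A i ∈ 𝒜) →
    ∑ s ∈ Finset.univ.powerset.filter (fun s : Finset (Fin n) => s.Nonempty),
      (-1 : ℝ) ^ (s.card - 1) * φ (⋂ i ∈ s, A i) ≤ φ (⋃ i, A i)

/-- Restriction of a conditional probability to the domain `𝒜 × ℬ⁰`, viewed as a point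
of the product space `ℝ^(𝒜 × ℬ⁰)`. -/
def restrictPairs (𝒜 ℬ : Set (Set Ω)) (Q : Set Ω → Set Ω → ℝ)
    (p : {p : Set Ω × Set Ω // p.1 ∈ 𝒜 ∧ p.2 ∈ ℬ ∧ p.2.Nonempty}) : ℝ :=
  Q p.val.1 p.val.2

/-- Restriction of a set function to the domain `𝒜`, viewed as a point of `ℝ^𝒜`. -/
def restrictDom (𝒜 : Set (Set Ω)) (μ : Set Ω → ℝ) (A : {A : Set Ω // A ∈ 𝒜}) : ℝ :=
  μ A.val

/-- The field of all unions of members of the partition `H`, i.e. `⟨ℒ⟩*`. -/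
def unionsOf {ι : Type*} (H : ι → Set Ω) : Set (Set Ω) :=
  {A | ∃ S : Set ι, A = ⋃ i ∈ S, H i}

/-- The set `𝒬^fd` of fully ℒ-disintegrable full conditional probabilities on `𝒜`
extending `{π, σ}`. -/
def QfdSet {ι : Type*} (𝒜 𝒜L : Set (Set Ω)) (H : ι → Set Ω)
    (π : Set Ω → ℝ) (σ : Set Ω → ι → ℝ) : Set (Set Ω → Set Ω → ℝ) :=
  {Q | IsFCP 𝒜 Q ∧ ExtendsPriorStrategy 𝒜 𝒜L H π σ Q ∧
    ∀ F ∈ 𝒜, ∀ K ∈ 𝒜L, K.Nonempty →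
      Q F K = lowerSInt H 𝒜L (fun i => σ F i) fun B => Q B K}

/-- The set `𝒬^fsc` of fully strongly ℒ-conglomerable full conditional probabilities
on `𝒜` extending `{π, σ}`. -/
def QfscSet {ι : Type*} (𝒜 𝒜L : Set (Set Ω)) (H : ι → Set Ω)
    (π : Set Ω → ℝ) (σ : Set Ω → ι → ℝ) : Set (Set Ω → Set Ω → ℝ) :=
  {Q | IsFCP 𝒜 Q ∧ ExtendsPriorStrategy 𝒜 𝒜L H π σ Q ∧
    ∀ F ∈ 𝒜, ∀ K ∈ 𝒜L, K.Nonempty → ∀ B ∈ 𝒜L, B.Nonempty → B ⊆ K →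
      Q B K * sInf {x | ∃ i, H i ⊆ B ∧ x = σ F i} ≤ Q (F ∩ B) K ∧
      Q (F ∩ B) K ≤ Q B K * sSup {x | ∃ i, H i ⊆ B ∧ x = σ F i}}

/-- The set `𝒫^sc` of strongly ℒ-conglomerable joint probabilities consistent with `{π, σ}`. -/
def PscSet {ι : Type*} (𝒜 𝒜L : Set (Set Ω)) (H : ι → Set Ω)
    (π : Set Ω → ℝ) (σ : Set Ω → ι → ℝ) : Set (Set Ω → ℝ) :=
  {μ | (∃ P ∈ FCPSet 𝒜 𝒜L H π σ, μ = fun F => P F Set.univ) ∧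
    ∀ F ∈ 𝒜, ∀ B ∈ 𝒜L, B.Nonempty →
      π B * sInf {x | ∃ i, H i ⊆ B ∧ x = σ F i} ≤ μ (F ∩ B) ∧
      μ (F ∩ B) ≤ π B * sSup {x | ∃ i, H i ⊆ B ∧ x = σ F i}}

/-- The set `𝒫^fd` of fully ℒ-disintegrable conditional probabilities on `𝒜 × 𝒜L⁰`
extending `{π, σ}`. -/
def PfdSet {ι : Type*} (𝒜 𝒜L : Set (Set Ω)) (H : ι → Set Ω)
    (π : Set Ω → ℝ) (σ : Set Ω → ι → ℝ) : Set (Set Ω → Set Ω → ℝ) :=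
  {P | (∀ E ∈ 𝒜, ∀ K ∈ 𝒜L, K.Nonempty → P E K = P (E ∩ K) K) ∧
    (∀ K ∈ 𝒜L, K.Nonempty → IsFAP 𝒜 fun E => P E K) ∧
    (∀ E ∈ 𝒜, ∀ F ∈ 𝒜, ∀ K ∈ 𝒜L, K.Nonempty → E ∩ K ∈ 𝒜L → (E ∩ K).Nonempty →
      P (E ∩ F) K = P E K * P F (E ∩ K)) ∧
    (∀ B ∈ 𝒜L, P B Set.univ = π B) ∧ (∀ F ∈ 𝒜, ∀ i, P F (H i) = σ F i) ∧
    ∀ F ∈ 𝒜, ∀ K ∈ 𝒜L, K.Nonempty →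
      P F K = lowerSInt H 𝒜L (fun i => σ F i) fun B => P B K}

/-- The Choquet integral `C∫ X dφ = ∫₀¹ φ₊((X ≥ t)) dt` of a `[0,1]`-valued `X : ℒ → ℝ`
with respect to a capacity `φ` on `𝒜L`, where `φ₊` is the inner extension of `φ`. -/
noncomputable def choquetInt {ι : Type*} (H : ι → Set Ω) (𝒜L : Set (Set Ω))
    (X : ι → ℝ) (φ : Set Ω → ℝ) : ℝ :=
  ∫ t in (0 : ℝ)..(1 : ℝ),
    sSup {y | ∃ B ∈ 𝒜L, B ⊆ (⋃ i ∈ {i | t ≤ X i}, H i) ∧ y = φ B}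

/-!
The lower Stieltjes integral is the supremum of lower sums over finite `𝒜L`-partitions, and lower
sums increase under refinement, so the supremum may be taken over the refinements of any fixed
partition. Every piece of a refinement of `{G, Gᶜ}` lies in `G` or in `Gᶜ`. This is enough to see
that the integral ignores the atoms outside a set of conditional probability one (C1, and the
values on `ℒ`), that it returns `π̃(B|K)` for the integrand `σ(B|·)` with `B ∈ 𝒜L`, and that the
lower sums of `σ(G ∩ F|·)` against `π̃(·|K)` are `π̃(G|K)` times those of `σ(F|·)` against
`π̃(·|G)` (C3).

Additivity (C2) is where `𝒜L`-continuity enters: sets of `𝒜L` squeezed between the level sets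
`(X ≥ t + δ)` and `(X ≥ t)`, for `t` on a grid of mesh `δ`, generate a partition on whose pieces
`X` oscillates by at most `2δ`. So the lower and upper integrals of `X` agree, and as the lower
integral is superadditive and the upper one subadditive, both are additive on such integrands.
-/

open Bornology

namespace IsSetField

variable {𝒜 : Set (Set Ω)} {A B : Set Ω}

theorem empty_mem (h : IsSetField 𝒜) : ∅ ∈ 𝒜 := by
  simpa using h.2.1 _ h.1

theorem compl_mem (h : IsSetField 𝒜) (hA : A ∈ 𝒜) : Aᶜ ∈ 𝒜 := h.2.1 A hA

theorem union_mem (h : IsSetField 𝒜) (hA : A ∈ 𝒜) (hB : B ∈ 𝒜) : A ∪ B ∈ 𝒜 :=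
  h.2.2 A hA B hB

theorem inter_mem (h : IsSetField 𝒜) (hA : A ∈ 𝒜) (hB : B ∈ 𝒜) : A ∩ B ∈ 𝒜 := by
  simpa [compl_union] using h.compl_mem (h.union_mem (h.compl_mem hA) (h.compl_mem hB))

theorem diff_mem (h : IsSetField 𝒜) (hA : A ∈ 𝒜) (hB : B ∈ 𝒜) : A \ B ∈ 𝒜 :=
  h.inter_mem hA (h.compl_mem hB)

theorem sUnion_mem (h : IsSetField 𝒜) {T : Finset (Set Ω)} (hT : (T : Set (Set Ω)) ⊆ 𝒜) :
    ⋃₀ (T : Set (Set Ω)) ∈ 𝒜 := by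
  induction T using Finset.induction_on with
  | empty => simpa using h.empty_mem
  | insert A T _ ih =>
    rw [Finset.coe_insert, sUnion_insert]
    exact h.union_mem (hT (by simp)) (ih fun B hB => hT (by simp [hB]))

end IsSetField

namespace IsFAP

variable {𝒜 ℬ : Set (Set Ω)} {μ : Set Ω → ℝ} {A B : Set Ω}

theorem nonneg (hμ : IsFAP 𝒜 μ) (hA : A ∈ 𝒜) : 0 ≤ μ A := (hμ.1 A hA).1

theorem union (hμ : IsFAP 𝒜 μ) (hA : A ∈ 𝒜) (hB : B ∈ 𝒜) (hAB : Disjoint A B) :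
    μ (A ∪ B) = μ A + μ B :=
  hμ.2.2 A hA B hB hAB

theorem of_subset (hμ : IsFAP 𝒜 μ) (hℬ : ℬ ⊆ 𝒜) : IsFAP ℬ μ :=
  ⟨fun A hA => hμ.1 A (hℬ hA), hμ.2.1, fun A hA B hB => hμ.2.2 A (hℬ hA) B (hℬ hB)⟩

theorem empty (hμ : IsFAP 𝒜 μ) (h𝒜 : IsSetField 𝒜) : μ ∅ = 0 := by
  simpa using hμ.union h𝒜.empty_mem h𝒜.empty_mem (disjoint_empty _)

theorem compl (hμ : IsFAP 𝒜 μ) (h𝒜 : IsSetField 𝒜) (hA : A ∈ 𝒜) : μ Aᶜ = 1 - μ A := by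
  have := hμ.union hA (h𝒜.compl_mem hA) disjoint_compl_right
  rw [union_compl_self, hμ.2.1] at this
  linarith

theorem mono (hμ : IsFAP 𝒜 μ) (h𝒜 : IsSetField 𝒜) (hA : A ∈ 𝒜) (hB : B ∈ 𝒜) (hAB : A ⊆ B) :
    μ A ≤ μ B := by
  have := hμ.union hA (h𝒜.diff_mem hB hA) disjoint_sdiff_right
  rw [union_sdiff_cancel hAB] at this
  linarith [hμ.nonneg (h𝒜.diff_mem hB hA)]

theorem eq_zero_of_subset (hμ : IsFAP 𝒜 μ) (h𝒜 : IsSetField 𝒜) (hA : A ∈ 𝒜) (hB : B ∈ 𝒜)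
    (hAB : A ⊆ B) (hB0 : μ B = 0) : μ A = 0 :=
  le_antisymm (hB0 ▸ hμ.mono h𝒜 hA hB hAB) (hμ.nonneg hA)

theorem inter_eq_of_eq_one (hμ : IsFAP 𝒜 μ) (h𝒜 : IsSetField 𝒜) (hA : A ∈ 𝒜) (hB : B ∈ 𝒜)
    (hB1 : μ B = 1) : μ (A ∩ B) = μ A := by
  have hdiff : μ (A \ B) = 0 :=
    hμ.eq_zero_of_subset h𝒜 (h𝒜.diff_mem hA hB) (h𝒜.compl_mem hB) (sdiff_subset_compl A B)
      (by rw [hμ.compl h𝒜 hB, hB1, sub_self])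
  have := hμ.union (h𝒜.inter_mem hA hB) (h𝒜.diff_mem hA hB) disjoint_sdiff_inter.symm
  rw [inter_union_sdiff] at this
  linarith

theorem sum_inter (hμ : IsFAP 𝒜 μ) (h𝒜 : IsSetField 𝒜) (hB : B ∈ 𝒜) {T : Finset (Set Ω)}
    (hT : (T : Set (Set Ω)) ⊆ 𝒜) (hdisj : (T : Set (Set Ω)).PairwiseDisjoint id) :
    ∑ A ∈ T, μ (B ∩ A) = μ (B ∩ ⋃₀ (T : Set (Set Ω))) := by
  induction T using Finset.induction_on with
  | empty => simp [hμ.empty h𝒜]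
  | insert A T hAT ih =>
    rw [Finset.coe_insert] at hT hdisj
    have hT' := (subset_insert A _).trans hT
    have hdisjA : Disjoint (B ∩ A) (B ∩ ⋃₀ (T : Set (Set Ω))) :=
      (disjoint_sUnion_right.2 fun C hC => hdisj (mem_insert A _) (mem_insert_of_mem A hC)
        (ne_of_mem_of_not_mem hC hAT).symm).mono inter_subset_right inter_subset_right
    rw [Finset.sum_insert hAT, ih hT' (hdisj.subset (subset_insert A _)), Finset.coe_insert,
      sUnion_insert, inter_union_distrib_left,
      hμ.union (h𝒜.inter_mem hB (hT (mem_insert A _))) (h𝒜.inter_mem hB (h𝒜.sUnion_mem hT'))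
        hdisjA]

end IsFAP

namespace IsPartition

variable {ι : Type*} {H : ι → Set Ω}

theorem mem_of_subset_biUnion (hH : IsPartition H) {S : Set ι} {j : ι}
    (h : H j ⊆ ⋃ i ∈ S, H i) : j ∈ S := by
  obtain ⟨x, hx⟩ := hH.1 j
  obtain ⟨i, hi, hxi⟩ := mem_iUnion₂.1 (h hx)
  obtain rfl : i = j := by_contra fun hne => disjoint_left.1 (hH.2.1 hne) hxi hx
  exact hi

theorem eq_of_subset (hH : IsPartition H) {i j : ι} (h : H j ⊆ H i) : j = i :=
  mem_singleton_iff.1 (hH.mem_of_subset_biUnion (by simpa using h))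

end IsPartition

theorem IsFieldOver.exists_subset {ι : Type*} {H : ι → Set Ω} {𝒜L : Set (Set Ω)}
    (h𝒜L : IsFieldOver H 𝒜L) {A : Set Ω} (hA : A ∈ 𝒜L) (hne : A.Nonempty) :
    ∃ i, H i ⊆ A := by
  obtain ⟨S, rfl⟩ := h𝒜L.2.2 A hA
  obtain ⟨i, hi, -⟩ := mem_iUnion₂.1 hne.some_mem
  exact ⟨i, subset_biUnion_of_mem hi⟩

def IsRefinement (R T : Finset (Set Ω)) : Prop :=
  ∀ C ∈ R, ∃ A ∈ T, C ⊆ A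

theorem IsRefinement.refl (T : Finset (Set Ω)) : IsRefinement T T :=
  fun C hC => ⟨C, hC, subset_rfl⟩

noncomputable def twoPart (K : Set Ω) : Finset (Set Ω) :=
  ({K, Kᶜ} : Finset (Set Ω)).filter Set.Nonempty

noncomputable def commonRefinement (T T' : Finset (Set Ω)) : Finset (Set Ω) :=
  ((T ×ˢ T').image fun p => p.1 ∩ p.2).filter Set.Nonempty

theorem mem_twoPart {K C : Set Ω} : C ∈ twoPart K ↔ (C = K ∨ C = Kᶜ) ∧ C.Nonempty := by
  simp [twoPart]

theorem mem_commonRefinement {T T' : Finset (Set Ω)} {C : Set Ω} :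
    C ∈ commonRefinement T T' ↔ (∃ A ∈ T, ∃ A' ∈ T', A ∩ A' = C) ∧ C.Nonempty := by
  simp only [commonRefinement, Finset.mem_filter, Finset.mem_image, Finset.mem_product,
    Prod.exists, and_assoc, exists_and_left]

theorem isRefinement_commonRefinement_left (T T' : Finset (Set Ω)) :
    IsRefinement (commonRefinement T T') T := by
  intro C hC
  obtain ⟨⟨A, hA, A', -, rfl⟩, -⟩ := mem_commonRefinement.1 hC
  exact ⟨A, hA, inter_subset_left⟩

theorem isRefinement_commonRefinement_right (T T' : Finset (Set Ω)) :
    IsRefinement (commonRefinement T T') T' := by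
  intro C hC
  obtain ⟨⟨A, -, A', hA', rfl⟩, -⟩ := mem_commonRefinement.1 hC
  exact ⟨A', hA', inter_subset_right⟩

theorem IsRefinement.subset_or_subset_compl {R : Finset (Set Ω)} {K C : Set Ω}
    (hR : IsRefinement R (twoPart K)) (hC : C ∈ R) : C ⊆ K ∨ C ⊆ Kᶜ := by
  obtain ⟨A, hA, hCA⟩ := hR C hC
  rcases (mem_twoPart.1 hA).1 with rfl | rfl
  exacts [Or.inl hCA, Or.inr hCA]

namespace IsFinPart

variable {𝒜L : Set (Set Ω)} {T T' R : Finset (Set Ω)} {μ : Set Ω → ℝ}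

theorem sum_inter (hT : IsFinPart 𝒜L T) (h𝒜L : IsSetField 𝒜L) (hμ : IsFAP 𝒜L μ) {B : Set Ω}
    (hB : B ∈ 𝒜L) : ∑ A ∈ T, μ (B ∩ A) = μ B := by
  rw [hμ.sum_inter h𝒜L hB hT.1 hT.2.2.1, hT.2.2.2, inter_univ]

theorem sum_eq_one (hT : IsFinPart 𝒜L T) (h𝒜L : IsSetField 𝒜L) (hμ : IsFAP 𝒜L μ) :
    ∑ A ∈ T, μ A = 1 := by
  simpa [hμ.2.1] using hT.sum_inter h𝒜L hμ h𝒜L.1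

theorem subset_of_isRefinement (hT : IsFinPart 𝒜L T) (hRT : IsRefinement R T) {A C : Set Ω}
    (hC : C ∈ R) (hA : A ∈ T) (hCA : (C ∩ A).Nonempty) : C ⊆ A := by
  obtain ⟨A', hA', hCA'⟩ := hRT C hC
  obtain rfl : A' = A := by_contra fun hne =>
    disjoint_left.1 (hT.2.2.1 A' hA' A hA hne) (hCA' hCA.some_mem.1) hCA.some_mem.2
  exact hCA'

theorem commonRefinement (hT : IsFinPart 𝒜L T) (hT' : IsFinPart 𝒜L T') (h𝒜L : IsSetField 𝒜L) :
    IsFinPart 𝒜L (commonRefinement T T') := by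
  refine ⟨?_, fun C hC => (mem_commonRefinement.1 hC).2, ?_, ?_⟩
  · intro C hC
    obtain ⟨⟨A, hA, A', hA', rfl⟩, -⟩ := mem_commonRefinement.1 hC
    exact h𝒜L.inter_mem (hT.1 hA) (hT'.1 hA')
  · intro C hC D hD hCD
    obtain ⟨⟨A, hA, A', hA', rfl⟩, -⟩ := mem_commonRefinement.1 hC
    obtain ⟨⟨B, hB, B', hB', rfl⟩, -⟩ := mem_commonRefinement.1 hD
    by_cases hAB : A = B
    · subst hAB
      exact (hT'.2.2.1 A' hA' B' hB' fun h => hCD (h ▸ rfl)).mono inter_subset_right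
        inter_subset_right
    · exact (hT.2.2.1 A hA B hB hAB).mono inter_subset_left inter_subset_left
  · refine eq_univ_of_forall fun x => ?_
    obtain ⟨A, hA, hxA⟩ := mem_sUnion.1 (hT.2.2.2.symm ▸ mem_univ x)
    obtain ⟨A', hA', hxA'⟩ := mem_sUnion.1 (hT'.2.2.2.symm ▸ mem_univ x)
    exact ⟨A ∩ A', mem_commonRefinement.2 ⟨⟨A, hA, A', hA', rfl⟩, x, hxA, hxA'⟩, hxA, hxA'⟩

end IsFinPart

theorem isFinPart_twoPart {𝒜L : Set (Set Ω)} (h𝒜L : IsSetField 𝒜L) {K : Set Ω} (hK : K ∈ 𝒜L) :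
    IsFinPart 𝒜L (twoPart K) := by
  refine ⟨?_, fun A hA => (mem_twoPart.1 hA).2, ?_, ?_⟩
  · intro A hA
    rcases (mem_twoPart.1 hA).1 with rfl | rfl
    exacts [hK, h𝒜L.compl_mem hK]
  · intro A hA B hB hAB
    rcases (mem_twoPart.1 hA).1 with rfl | rfl <;> rcases (mem_twoPart.1 hB).1 with rfl | rfl
    all_goals first
      | exact absurd rfl hAB
      | exact disjoint_compl_right
      | exact disjoint_compl_left
  · refine eq_univ_of_forall fun x => ?_
    by_cases hx : x ∈ K
    · exact ⟨K, mem_twoPart.2 ⟨Or.inl rfl, x, hx⟩, hx⟩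
    · exact ⟨Kᶜ, mem_twoPart.2 ⟨Or.inr rfl, x, hx⟩, hx⟩

theorem exists_isFinPart {𝒜L : Set (Set Ω)} (h𝒜L : IsSetField 𝒜L) : ∃ T, IsFinPart 𝒜L T :=
  ⟨_, isFinPart_twoPart h𝒜L h𝒜L.1⟩

section LowerStieltjes

variable {ι : Type*} {H : ι → Set Ω} {𝒜L : Set (Set Ω)} {X Y : ι → ℝ} {μ ν : Set Ω → ℝ}
  {A B G K : Set Ω} {T R : Finset (Set Ω)}

noncomputable def infOn (H : ι → Set Ω) (X : ι → ℝ) (A : Set Ω) : ℝ :=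
  sInf {y | ∃ i, H i ⊆ A ∧ y = X i}

noncomputable def lowerSum (H : ι → Set Ω) (X : ι → ℝ) (μ : Set Ω → ℝ) (T : Finset (Set Ω)) :
    ℝ :=
  ∑ A ∈ T, infOn H X A * μ A

def lowerSums (H : ι → Set Ω) (𝒜L : Set (Set Ω)) (X : ι → ℝ) (μ : Set Ω → ℝ) : Set ℝ :=
  {x | ∃ T, IsFinPart 𝒜L T ∧ x = lowerSum H X μ T}

theorem lowerSInt_eq_sSup_lowerSums : lowerSInt H 𝒜L X μ = sSup (lowerSums H 𝒜L X μ) := rfl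

theorem infOn_le (hX : BddBelow (range X)) {i : ι} (hi : H i ⊆ A) : infOn H X A ≤ X i :=
  csInf_le (hX.mono (by rintro _ ⟨j, -, rfl⟩; exact mem_range_self j)) ⟨i, hi, rfl⟩

theorem le_infOn (h𝒜L : IsFieldOver H 𝒜L) (hA : A ∈ 𝒜L) (hne : A.Nonempty) {c : ℝ}
    (h : ∀ i, H i ⊆ A → c ≤ X i) : c ≤ infOn H X A := by
  obtain ⟨i, hi⟩ := h𝒜L.exists_subset hA hne
  exact le_csInf ⟨X i, i, hi, rfl⟩ (by rintro _ ⟨j, hj, rfl⟩; exact h j hj)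

theorem infOn_congr (h : ∀ i, H i ⊆ A → X i = Y i) : infOn H X A = infOn H Y A := by
  simp only [infOn]
  congr 1
  ext y
  exact exists_congr fun i => and_congr_right fun hi => by rw [h i hi]

theorem infOn_eq_of_forall (h𝒜L : IsFieldOver H 𝒜L) (hA : A ∈ 𝒜L) (hne : A.Nonempty) {c : ℝ}
    (h : ∀ i, H i ⊆ A → X i = c) : infOn H X A = c := by
  obtain ⟨i, hi⟩ := h𝒜L.exists_subset hA hne
  have : {y | ∃ i, H i ⊆ A ∧ y = X i} = {c} :=
    eq_singleton_iff_unique_mem.2 ⟨⟨i, hi, (h i hi).symm⟩, by rintro _ ⟨j, hj, rfl⟩; exact h j hj⟩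
  rw [infOn, this, csInf_singleton]

theorem infOn_anti (h𝒜L : IsFieldOver H 𝒜L) (hX : BddBelow (range X)) (hB : B ∈ 𝒜L)
    (hne : B.Nonempty) (hBA : B ⊆ A) : infOn H X A ≤ infOn H X B :=
  le_infOn h𝒜L hB hne fun _ hi => infOn_le hX (hi.trans hBA)

theorem infOn_add_infOn_le (h𝒜L : IsFieldOver H 𝒜L) (hX : BddBelow (range X))
    (hY : BddBelow (range Y)) (hA : A ∈ 𝒜L) (hne : A.Nonempty) :
    infOn H X A + infOn H Y A ≤ infOn H (X + Y) A :=
  le_infOn h𝒜L hA hne fun _ hi => add_le_add (infOn_le hX hi) (infOn_le hY hi)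

theorem lowerSum_le_of_isRefinement (h𝒜L : IsFieldOver H 𝒜L) (hμ : IsFAP 𝒜L μ)
    (hX : BddBelow (range X)) (hT : IsFinPart 𝒜L T) (hR : IsFinPart 𝒜L R)
    (hRT : IsRefinement R T) : lowerSum H X μ T ≤ lowerSum H X μ R := by
  calc lowerSum H X μ T = ∑ A ∈ T, ∑ C ∈ R, infOn H X A * μ (A ∩ C) :=
        Finset.sum_congr rfl fun A hA => by rw [← Finset.mul_sum, hR.sum_inter h𝒜L.1 hμ (hT.1 hA)]
    _ ≤ ∑ A ∈ T, ∑ C ∈ R, infOn H X C * μ (C ∩ A) := by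
        refine Finset.sum_le_sum fun A hA => Finset.sum_le_sum fun C hC => ?_
        rw [inter_comm A C]
        rcases (C ∩ A).eq_empty_or_nonempty with hCA | hCA
        · simp [hCA, hμ.empty h𝒜L.1]
        · exact mul_le_mul_of_nonneg_right
            (infOn_anti h𝒜L hX (hR.1 hC) (hR.2.1 C hC) (hT.subset_of_isRefinement hRT hC hA hCA))
            (hμ.nonneg (h𝒜L.1.inter_mem (hR.1 hC) (hT.1 hA)))
    _ = lowerSum H X μ R := by
        rw [Finset.sum_comm]
        exact Finset.sum_congr rfl fun C hC => by
          rw [← Finset.mul_sum, hT.sum_inter h𝒜L.1 hμ (hR.1 hC)]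

theorem le_lowerSum (h𝒜L : IsFieldOver H 𝒜L) (hμ : IsFAP 𝒜L μ) (hT : IsFinPart 𝒜L T) {a : ℝ}
    (ha : ∀ i, a ≤ X i) : a ≤ lowerSum H X μ T :=
  calc a = ∑ A ∈ T, a * μ A := by rw [← Finset.mul_sum, hT.sum_eq_one h𝒜L.1 hμ, mul_one]
    _ ≤ lowerSum H X μ T := Finset.sum_le_sum fun A hA => mul_le_mul_of_nonneg_right
        (le_infOn h𝒜L (hT.1 hA) (hT.2.1 A hA) fun i _ => ha i) (hμ.nonneg (hT.1 hA))

theorem lowerSum_le (h𝒜L : IsFieldOver H 𝒜L) (hμ : IsFAP 𝒜L μ) (hT : IsFinPart 𝒜L T)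
    (hX : BddBelow (range X)) {b : ℝ} (hb : ∀ i, X i ≤ b) : lowerSum H X μ T ≤ b :=
  calc lowerSum H X μ T ≤ ∑ A ∈ T, b * μ A := Finset.sum_le_sum fun A hA => by
        obtain ⟨i, hi⟩ := h𝒜L.exists_subset (hT.1 hA) (hT.2.1 A hA)
        exact mul_le_mul_of_nonneg_right ((infOn_le hX hi).trans (hb i)) (hμ.nonneg (hT.1 hA))
    _ = b := by rw [← Finset.mul_sum, hT.sum_eq_one h𝒜L.1 hμ, mul_one]

theorem lowerSum_add_lowerSum_le (h𝒜L : IsFieldOver H 𝒜L) (hμ : IsFAP 𝒜L μ)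
    (hX : BddBelow (range X)) (hY : BddBelow (range Y)) (hR : IsFinPart 𝒜L R) :
    lowerSum H X μ R + lowerSum H Y μ R ≤ lowerSum H (X + Y) μ R := by
  rw [lowerSum, lowerSum, ← Finset.sum_add_distrib]
  exact Finset.sum_le_sum fun C hC => by
    rw [← add_mul]
    exact mul_le_mul_of_nonneg_right (infOn_add_infOn_le h𝒜L hX hY (hR.1 hC) (hR.2.1 C hC))
      (hμ.nonneg (hR.1 hC))

theorem lowerSums_nonempty (h𝒜L : IsSetField 𝒜L) : (lowerSums H 𝒜L X μ).Nonempty :=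
  let ⟨T, hT⟩ := exists_isFinPart h𝒜L
  ⟨_, T, hT, rfl⟩

theorem bddAbove_lowerSums (h𝒜L : IsFieldOver H 𝒜L) (hμ : IsFAP 𝒜L μ)
    (hX : IsBounded (range X)) : BddAbove (lowerSums H 𝒜L X μ) := by
  obtain ⟨b, hb⟩ := hX.bddAbove
  exact ⟨b, by
    rintro _ ⟨T, hT, rfl⟩
    exact lowerSum_le h𝒜L hμ hT hX.bddBelow fun i => hb (mem_range_self i)⟩

theorem lowerSum_le_lowerSInt (h𝒜L : IsFieldOver H 𝒜L) (hμ : IsFAP 𝒜L μ)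
    (hX : IsBounded (range X)) (hT : IsFinPart 𝒜L T) : lowerSum H X μ T ≤ lowerSInt H 𝒜L X μ :=
  le_csSup (bddAbove_lowerSums h𝒜L hμ hX) ⟨T, hT, rfl⟩

theorem lowerSInt_le_of_forall (h𝒜L : IsSetField 𝒜L) {c : ℝ}
    (h : ∀ T, IsFinPart 𝒜L T → lowerSum H X μ T ≤ c) : lowerSInt H 𝒜L X μ ≤ c :=
  csSup_le (lowerSums_nonempty h𝒜L) (by rintro _ ⟨T, hT, rfl⟩; exact h T hT)

theorem le_lowerSInt (h𝒜L : IsFieldOver H 𝒜L) (hμ : IsFAP 𝒜L μ) (hX : IsBounded (range X))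
    {a : ℝ} (ha : ∀ i, a ≤ X i) : a ≤ lowerSInt H 𝒜L X μ :=
  let ⟨_, hT⟩ := exists_isFinPart h𝒜L.1
  (le_lowerSum h𝒜L hμ hT ha).trans (lowerSum_le_lowerSInt h𝒜L hμ hX hT)

theorem lowerSInt_le (h𝒜L : IsFieldOver H 𝒜L) (hμ : IsFAP 𝒜L μ) (hX : BddBelow (range X))
    {b : ℝ} (hb : ∀ i, X i ≤ b) : lowerSInt H 𝒜L X μ ≤ b :=
  lowerSInt_le_of_forall h𝒜L.1 fun _ hT => lowerSum_le h𝒜L hμ hT hX hb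

theorem lowerSInt_const (h𝒜L : IsFieldOver H 𝒜L) (hμ : IsFAP 𝒜L μ) (c : ℝ) :
    lowerSInt H 𝒜L (fun _ => c) μ = c :=
  le_antisymm (lowerSInt_le h𝒜L hμ (bddBelow_singleton.mono range_const_subset) fun _ => le_rfl)
    (le_lowerSInt h𝒜L hμ (isBounded_singleton.subset range_const_subset) fun _ => le_rfl)

theorem lowerSInt_congr_measure (h : ∀ B ∈ 𝒜L, μ B = ν B) :
    lowerSInt H 𝒜L X μ = lowerSInt H 𝒜L X ν := by
  simp only [lowerSInt_eq_sSup_lowerSums, lowerSums]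
  congr 1
  ext x
  exact exists_congr fun T => and_congr_right fun hT => by
    rw [lowerSum, lowerSum, Finset.sum_congr rfl fun A hA => by rw [h A (hT.1 hA)]]

theorem lowerSInt_eq_sSup_isRefinement (h𝒜L : IsFieldOver H 𝒜L) (hμ : IsFAP 𝒜L μ)
    (hX : IsBounded (range X)) {T₀ : Finset (Set Ω)} (hT₀ : IsFinPart 𝒜L T₀) :
    lowerSInt H 𝒜L X μ =
      sSup {x | ∃ R, IsFinPart 𝒜L R ∧ IsRefinement R T₀ ∧ x = lowerSum H X μ R} := by
  have hsub : {x | ∃ R, IsFinPart 𝒜L R ∧ IsRefinement R T₀ ∧ x = lowerSum H X μ R} ⊆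
      lowerSums H 𝒜L X μ := by
    rintro _ ⟨R, hR, -, rfl⟩
    exact ⟨R, hR, rfl⟩
  have hbdd := bddAbove_lowerSums h𝒜L hμ hX
  refine le_antisymm (csSup_le (lowerSums_nonempty h𝒜L.1) ?_)
    (csSup_le_csSup hbdd ⟨_, T₀, hT₀, IsRefinement.refl T₀, rfl⟩ hsub)
  rintro _ ⟨T, hT, rfl⟩
  have hR := hT.commonRefinement hT₀ h𝒜L.1
  exact le_csSup_of_le (hbdd.mono hsub) ⟨_, hR, isRefinement_commonRefinement_right T T₀, rfl⟩
    (lowerSum_le_of_isRefinement h𝒜L hμ hX.bddBelow hT hR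
      (isRefinement_commonRefinement_left T T₀))

theorem lowerSInt_eq_of_isRefinement (h𝒜L : IsFieldOver H 𝒜L) (hμ : IsFAP 𝒜L μ)
    (hX : IsBounded (range X)) {T₀ : Finset (Set Ω)} (hT₀ : IsFinPart 𝒜L T₀) {c : ℝ}
    (h : ∀ R, IsFinPart 𝒜L R → IsRefinement R T₀ → lowerSum H X μ R = c) :
    lowerSInt H 𝒜L X μ = c := by
  rw [lowerSInt_eq_sSup_isRefinement h𝒜L hμ hX hT₀, ← csSup_singleton c]
  congr 1
  refine eq_singleton_iff_unique_mem.2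
    ⟨⟨T₀, hT₀, IsRefinement.refl T₀, (h _ hT₀ (IsRefinement.refl T₀)).symm⟩, ?_⟩
  rintro _ ⟨R, hR, hRT, rfl⟩
  exact h R hR hRT

theorem lowerSInt_eq_mul_of_isRefinement (h𝒜L : IsFieldOver H 𝒜L) (hμ : IsFAP 𝒜L μ)
    (hν : IsFAP 𝒜L ν) (hX : IsBounded (range X)) (hY : IsBounded (range Y))
    {T₀ : Finset (Set Ω)} (hT₀ : IsFinPart 𝒜L T₀) {c : ℝ} (hc : 0 ≤ c)
    (h : ∀ R, IsFinPart 𝒜L R → IsRefinement R T₀ → lowerSum H X μ R = c * lowerSum H Y ν R) :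
    lowerSInt H 𝒜L X μ = c * lowerSInt H 𝒜L Y ν := by
  rw [lowerSInt_eq_sSup_isRefinement h𝒜L hμ hX hT₀, lowerSInt_eq_sSup_isRefinement h𝒜L hν hY hT₀,
    ← smul_eq_mul, ← Real.sSup_smul_of_nonneg hc]
  congr 1
  ext x
  simp only [mem_ofPred_eq, mem_smul_set, smul_eq_mul]
  constructor
  · rintro ⟨R, hR, hRT, rfl⟩
    exact ⟨_, ⟨R, hR, hRT, rfl⟩, (h R hR hRT).symm⟩
  · rintro ⟨_, ⟨R, hR, hRT, rfl⟩, rfl⟩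
    exact ⟨R, hR, hRT, (h R hR hRT).symm⟩

theorem lowerSInt_congr_of_compl_null (h𝒜L : IsFieldOver H 𝒜L) (hμ : IsFAP 𝒜L μ)
    (hX : IsBounded (range X)) (hY : IsBounded (range Y)) (hK : K ∈ 𝒜L) (hK0 : μ Kᶜ = 0)
    (h : ∀ i, H i ⊆ K → X i = Y i) : lowerSInt H 𝒜L X μ = lowerSInt H 𝒜L Y μ := by
  rw [← one_mul (lowerSInt H 𝒜L Y μ)]
  refine lowerSInt_eq_mul_of_isRefinement h𝒜L hμ hμ hX hY (isFinPart_twoPart h𝒜L.1 hK)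
    zero_le_one fun R hR hRK => ?_
  rw [one_mul]
  refine Finset.sum_congr rfl fun C hC => ?_
  rcases hRK.subset_or_subset_compl hC with hCK | hCK
  · rw [infOn_congr fun i hi => h i (hi.trans hCK)]
  · rw [hμ.eq_zero_of_subset h𝒜L.1 (hR.1 hC) (h𝒜L.1.compl_mem hK) hCK hK0, mul_zero, mul_zero]

theorem lowerSInt_eq_measure (h𝒜L : IsFieldOver H 𝒜L) (hμ : IsFAP 𝒜L μ)
    (hX : IsBounded (range X)) (hB : B ∈ 𝒜L) (h1 : ∀ i, H i ⊆ B → X i = 1)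
    (h0 : ∀ i, H i ⊆ Bᶜ → X i = 0) : lowerSInt H 𝒜L X μ = μ B := by
  refine lowerSInt_eq_of_isRefinement h𝒜L hμ hX (isFinPart_twoPart h𝒜L.1 hB) fun R hR hRB => ?_
  rw [← hR.sum_inter h𝒜L.1 hμ hB]
  refine Finset.sum_congr rfl fun C hC => ?_
  rcases hRB.subset_or_subset_compl hC with hCB | hCB
  · rw [infOn_eq_of_forall h𝒜L (hR.1 hC) (hR.2.1 C hC) fun i hi => h1 i (hi.trans hCB), one_mul,
      inter_eq_right.2 hCB]
  · rw [infOn_eq_of_forall h𝒜L (hR.1 hC) (hR.2.1 C hC) fun i hi => h0 i (hi.trans hCB), zero_mul,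
      (subset_compl_iff_disjoint_left.1 hCB).inter_eq, hμ.empty h𝒜L.1]

theorem lowerSInt_eq_mul (h𝒜L : IsFieldOver H 𝒜L) (hμ : IsFAP 𝒜L μ) (hν : IsFAP 𝒜L ν)
    (hX : IsBounded (range X)) (hY : IsBounded (range Y)) (hG : G ∈ 𝒜L)
    (hrel : ∀ B ∈ 𝒜L, μ (B ∩ G) = μ G * ν B) (hXY : ∀ i, H i ⊆ G → X i = Y i)
    (hX0 : ∀ i, H i ⊆ Gᶜ → X i = 0) : lowerSInt H 𝒜L X μ = μ G * lowerSInt H 𝒜L Y ν := by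
  refine lowerSInt_eq_mul_of_isRefinement h𝒜L hμ hν hX hY (isFinPart_twoPart h𝒜L.1 hG)
    (hμ.nonneg hG) fun R hR hRG => ?_
  rw [lowerSum, lowerSum, Finset.mul_sum]
  refine Finset.sum_congr rfl fun C hC => ?_
  rcases hRG.subset_or_subset_compl hC with hCG | hCG
  · have hμC : μ C = μ G * ν C := by rw [← hrel C (hR.1 hC), inter_eq_left.2 hCG]
    rw [infOn_congr fun i hi => hXY i (hi.trans hCG), hμC]
    ring
  · have hνC : μ G * ν C = 0 := by
      rw [← hrel C (hR.1 hC), (subset_compl_iff_disjoint_right.1 hCG).inter_eq, hμ.empty h𝒜L.1]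
    rw [infOn_eq_of_forall h𝒜L (hR.1 hC) (hR.2.1 C hC) fun i hi => hX0 i (hi.trans hCG)]
    linear_combination -infOn H Y C * hνC

theorem Bornology.IsBounded.range_add (hX : IsBounded (range X)) (hY : IsBounded (range Y)) :
    IsBounded (range (X + Y)) :=
  (hX.add hY).subset (range_subset_iff.2 fun i => add_mem_add (mem_range_self i) (mem_range_self i))

theorem Bornology.IsBounded.range_neg (hX : IsBounded (range X)) : IsBounded (range (-X)) :=
  hX.neg.subset (range_subset_iff.2 fun i => neg_mem_neg.2 (mem_range_self i))

theorem lowerSInt_add_lowerSInt_le (h𝒜L : IsFieldOver H 𝒜L) (hμ : IsFAP 𝒜L μ)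
    (hX : IsBounded (range X)) (hY : IsBounded (range Y)) :
    lowerSInt H 𝒜L X μ + lowerSInt H 𝒜L Y μ ≤ lowerSInt H 𝒜L (X + Y) μ := by
  rw [lowerSInt_eq_sSup_lowerSums, lowerSInt_eq_sSup_lowerSums,
    ← csSup_add (lowerSums_nonempty h𝒜L.1) (bddAbove_lowerSums h𝒜L hμ hX)
      (lowerSums_nonempty h𝒜L.1) (bddAbove_lowerSums h𝒜L hμ hY)]
  refine csSup_le ((lowerSums_nonempty h𝒜L.1).add (lowerSums_nonempty h𝒜L.1)) ?_
  rintro _ ⟨_, ⟨T, hT, rfl⟩, _, ⟨T', hT', rfl⟩, rfl⟩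
  have hR := hT.commonRefinement hT' h𝒜L.1
  calc lowerSum H X μ T + lowerSum H Y μ T'
      ≤ lowerSum H X μ (commonRefinement T T') + lowerSum H Y μ (commonRefinement T T') :=
        add_le_add
          (lowerSum_le_of_isRefinement h𝒜L hμ hX.bddBelow hT hR
            (isRefinement_commonRefinement_left T T'))
          (lowerSum_le_of_isRefinement h𝒜L hμ hY.bddBelow hT' hR
            (isRefinement_commonRefinement_right T T'))
    _ ≤ lowerSum H (X + Y) μ (commonRefinement T T') :=
        lowerSum_add_lowerSum_le h𝒜L hμ hX.bddBelow hY.bddBelow hR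
    _ ≤ lowerSInt H 𝒜L (X + Y) μ := lowerSum_le_lowerSInt h𝒜L hμ (hX.range_add hY) hR

/-- `-lowerSInt (-X)` is the upper Stieltjes integral of `X`, so this is `∫_* X ≤ ∫^* X`. -/
theorem lowerSInt_add_lowerSInt_neg_nonpos (h𝒜L : IsFieldOver H 𝒜L) (hμ : IsFAP 𝒜L μ)
    (hX : IsBounded (range X)) : lowerSInt H 𝒜L X μ + lowerSInt H 𝒜L (-X) μ ≤ 0 :=
  (lowerSInt_add_lowerSInt_le h𝒜L hμ hX hX.range_neg).trans
    (by rw [add_neg_cancel]; exact (lowerSInt_const h𝒜L hμ 0).le)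

end LowerStieltjes

section Continuity

variable {ι : Type*} {H : ι → Set Ω} {𝒜L : Set (Set Ω)} {X Y : ι → ℝ} {μ : Set Ω → ℝ}
  {A : Set Ω} {B : ℕ → Set Ω}

noncomputable def generatedPart (B : ℕ → Set Ω) : ℕ → Finset (Set Ω)
  | 0 => twoPart univ
  | n + 1 => commonRefinement (generatedPart B n) (twoPart (B n))

theorem isFinPart_generatedPart (h𝒜L : IsSetField 𝒜L) (hB : ∀ k, B k ∈ 𝒜L) (n : ℕ) :
    IsFinPart 𝒜L (generatedPart B n) := by
  induction n with
  | zero => exact isFinPart_twoPart h𝒜L h𝒜L.1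
  | succ n ih => exact ih.commonRefinement (isFinPart_twoPart h𝒜L (hB n)) h𝒜L

theorem subset_or_subset_compl_of_mem_generatedPart {n k : ℕ} (hk : k < n) {C : Set Ω}
    (hC : C ∈ generatedPart B n) : C ⊆ B k ∨ C ⊆ (B k)ᶜ := by
  induction n generalizing C with
  | zero => omega
  | succ n ih =>
    rcases Nat.lt_succ_iff_lt_or_eq.1 hk with hk | rfl
    · obtain ⟨A, hA, hCA⟩ := isRefinement_commonRefinement_left _ _ C hC
      exact (ih hk hA).imp hCA.trans hCA.trans
    · exact (isRefinement_commonRefinement_right _ _).subset_or_subset_compl hC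

theorem exists_nat_lt_neg_add_mul_le {M δ y : ℝ} (hδ : 0 < δ) (hy : |y| ≤ M) :
    ∃ k < ⌊2 * M / δ⌋₊ + 2, y < -M + k * δ ∧ -M + k * δ ≤ y + δ := by
  have hyM : 0 ≤ y + M := by linarith [neg_abs_le y]
  refine ⟨⌊(y + M) / δ⌋₊ + 1, ?_, ?_, ?_⟩
  · have := Nat.floor_le_floor (R := ℝ)
      (div_le_div_of_nonneg_right (by linarith [le_abs_self y]) hδ.le : (y + M) / δ ≤ 2 * M / δ)
    omega
  · have := Nat.lt_floor_add_one ((y + M) / δ)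
    rw [div_lt_iff₀ hδ] at this
    push_cast
    linarith
  · have := Nat.floor_le (div_nonneg hyM hδ.le)
    rw [le_div_iff₀ hδ] at this
    push_cast
    linarith

theorem ALContinuous.isBounded_range (hc : ALContinuous H 𝒜L X) : IsBounded (range X) :=
  let ⟨M, hM⟩ := hc.1
  isBounded_iff_forall_norm_le.2 ⟨M, forall_mem_range.2 hM⟩

theorem ALContinuous.exists_isFinPart_forall_le_add (hH : IsPartition H)
    (h𝒜L : IsFieldOver H 𝒜L) (hc : ALContinuous H 𝒜L X) {ε : ℝ} (hε : 0 < ε) :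
    ∃ T, IsFinPart 𝒜L T ∧ ∀ A ∈ T, ∀ i j, H i ⊆ A → H j ⊆ A → X i ≤ X j + ε := by
  obtain ⟨⟨M, hM⟩, hlevel⟩ := hc
  have hδ : 0 < ε / 2 := half_pos hε
  choose B hB hB₁ hB₂ using fun k : ℕ => hlevel (-M + k * (ε / 2)) (ε / 2) hδ
  refine ⟨generatedPart B (⌊2 * M / (ε / 2)⌋₊ + 2), isFinPart_generatedPart h𝒜L.1 hB _,
    fun A hA i j hi hj => ?_⟩
  by_contra! hij
  obtain ⟨k, hk, hjk, hkj⟩ := exists_nat_lt_neg_add_mul_le hδ (hM j)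
  have hiB : H i ⊆ B k := (subset_biUnion_of_mem (u := H)
    (show -M + k * (ε / 2) + ε / 2 ≤ X i by linarith)).trans (hB₁ k)
  have hAB : A ⊆ B k := (subset_or_subset_compl_of_mem_generatedPart hk hA).resolve_right
    fun hAB => let ⟨x, hx⟩ := hH.1 i; hAB (hi hx) (hiB hx)
  exact hjk.not_ge (hH.mem_of_subset_biUnion ((hj.trans hAB).trans (hB₂ k)))

theorem neg_le_infOn_add_infOn_neg (h𝒜L : IsFieldOver H 𝒜L) (hA : A ∈ 𝒜L) (hne : A.Nonempty)
    {ε : ℝ} (h : ∀ i j, H i ⊆ A → H j ⊆ A → X i ≤ X j + ε) :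
    -ε ≤ infOn H X A + infOn H (-X) A := by
  have : -infOn H X A - ε ≤ infOn H (-X) A := le_infOn h𝒜L hA hne fun j hj => by
    have := le_infOn h𝒜L hA hne fun i hi => sub_le_iff_le_add.2 (h j i hj hi)
    simp only [Pi.neg_apply]
    linarith
  linarith

theorem lowerSInt_neg_of_ALContinuous (hH : IsPartition H) (h𝒜L : IsFieldOver H 𝒜L)
    (hμ : IsFAP 𝒜L μ) (hc : ALContinuous H 𝒜L X) :
    lowerSInt H 𝒜L (-X) μ = -lowerSInt H 𝒜L X μ := by
  have hX := hc.isBounded_range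
  refine le_antisymm (by linarith [lowerSInt_add_lowerSInt_neg_nonpos h𝒜L hμ hX])
    (le_of_forall_pos_le_add fun ε hε => ?_)
  obtain ⟨T, hT, hosc⟩ := hc.exists_isFinPart_forall_le_add hH h𝒜L hε
  have hsum : -ε ≤ lowerSum H X μ T + lowerSum H (-X) μ T := by
    rw [lowerSum, lowerSum, ← Finset.sum_add_distrib]
    calc -ε = ∑ A ∈ T, -ε * μ A := by rw [← Finset.mul_sum, hT.sum_eq_one h𝒜L.1 hμ, mul_one]
      _ ≤ ∑ A ∈ T, (infOn H X A * μ A + infOn H (-X) A * μ A) :=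
        Finset.sum_le_sum fun A hA => by
          rw [← add_mul]
          exact mul_le_mul_of_nonneg_right
            (neg_le_infOn_add_infOn_neg h𝒜L (hT.1 hA) (hT.2.1 A hA) (hosc A hA))
            (hμ.nonneg (hT.1 hA))
  linarith [lowerSum_le_lowerSInt h𝒜L hμ hX hT, lowerSum_le_lowerSInt h𝒜L hμ hX.range_neg hT]

theorem lowerSInt_add_of_ALContinuous (hH : IsPartition H) (h𝒜L : IsFieldOver H 𝒜L)
    (hμ : IsFAP 𝒜L μ) (hcX : ALContinuous H 𝒜L X) (hcY : ALContinuous H 𝒜L Y) :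
    lowerSInt H 𝒜L (X + Y) μ = lowerSInt H 𝒜L X μ + lowerSInt H 𝒜L Y μ := by
  have hX := hcX.isBounded_range
  have hY := hcY.isBounded_range
  have hupper := lowerSInt_add_lowerSInt_neg_nonpos h𝒜L hμ (hX.range_add hY)
  have hneg := lowerSInt_add_lowerSInt_le h𝒜L hμ hX.range_neg hY.range_neg
  rw [← neg_add, lowerSInt_neg_of_ALContinuous hH h𝒜L hμ hcX,
    lowerSInt_neg_of_ALContinuous hH h𝒜L hμ hcY] at hneg
  exact le_antisymm (by linarith) (lowerSInt_add_lowerSInt_le h𝒜L hμ hX hY)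

end Continuity

namespace IsStrategy

variable {ι : Type*} {𝒜 : Set (Set Ω)} {H : ι → Set Ω} {σ : Set Ω → ι → ℝ} {F : Set Ω}

theorem isFAP (hσ : IsStrategy 𝒜 H σ) (i : ι) : IsFAP 𝒜 (σ · i) := (hσ i).1

theorem eq_one (hσ : IsStrategy 𝒜 H σ) (hF : F ∈ 𝒜) {i : ι} (h : H i ⊆ F) : σ F i = 1 :=
  (hσ i).2 F hF h

theorem eq_zero (hσ : IsStrategy 𝒜 H σ) (h𝒜 : IsSetField 𝒜) (hF : F ∈ 𝒜) {i : ι}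
    (h : H i ⊆ Fᶜ) : σ F i = 0 := by
  have := (hσ.isFAP i).compl h𝒜 hF
  rw [hσ.eq_one (h𝒜.compl_mem hF) h] at this
  linarith

theorem isBounded_range (hσ : IsStrategy 𝒜 H σ) (hF : F ∈ 𝒜) : IsBounded (range (σ F ·)) :=
  (Metric.isBounded_Icc 0 1).subset (range_subset_iff.2 fun i => (hσ.isFAP i).1 F hF)

end IsStrategy

namespace IsFCP

variable {𝒜 : Set (Set Ω)} {P : Set Ω → Set Ω → ℝ} {B G K : Set Ω}

theorem isFAP (hP : IsFCP 𝒜 P) (hK : K ∈ 𝒜) (hne : K.Nonempty) : IsFAP 𝒜 (P · K) :=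
  hP.2.1 K hK hne

theorem compl_self (hP : IsFCP 𝒜 P) (h𝒜 : IsSetField 𝒜) (hK : K ∈ 𝒜) (hne : K.Nonempty) :
    P Kᶜ K = 0 := by
  have hKK : P univ K = P K K := by simpa using hP.1 univ h𝒜.1 K hK hne
  calc P Kᶜ K = 1 - P K K := (hP.isFAP hK hne).compl h𝒜 hK
    _ = 0 := by rw [← hKK, show P univ K = 1 from (hP.isFAP hK hne).2.1, sub_self]

theorem inter_eq_mul (hP : IsFCP 𝒜 P) (hG : G ∈ 𝒜) (hB : B ∈ 𝒜) (hK : K ∈ 𝒜) (hne : K.Nonempty)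
    (hGK : G ⊆ K) (hGne : G.Nonempty) : P (B ∩ G) K = P G K * P B G := by
  have := hP.2.2 G hG B hB K hK hne (by rwa [inter_eq_left.2 hGK])
  rwa [inter_eq_left.2 hGK, inter_comm] at this

end IsFCP

section Disintegration

variable {ι : Type*} {H : ι → Set Ω} {𝒜L 𝒜 : Set (Set Ω)} {σ : Set Ω → ι → ℝ}
  {μ ν : Set Ω → ℝ} {B E F G K : Set Ω}

theorem lowerSInt_strategy_of_mem (h𝒜L : IsFieldOver H 𝒜L) (h𝒜 : IsSetField 𝒜)
    (hσ : IsStrategy 𝒜 H σ) (hμ : IsFAP 𝒜L μ) (hB : B ∈ 𝒜L) (hB𝒜 : B ∈ 𝒜) :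
    lowerSInt H 𝒜L (σ B ·) μ = μ B :=
  lowerSInt_eq_measure h𝒜L hμ (hσ.isBounded_range hB𝒜) hB (fun _ hi => hσ.eq_one hB𝒜 hi)
    fun _ hi => hσ.eq_zero h𝒜 hB𝒜 hi

theorem lowerSInt_strategy_inter_of_compl_null (h𝒜L : IsFieldOver H 𝒜L) (h𝒜 : IsSetField 𝒜)
    (hσ : IsStrategy 𝒜 H σ) (hμ : IsFAP 𝒜L μ) (hK : K ∈ 𝒜L) (hK𝒜 : K ∈ 𝒜) (hK0 : μ Kᶜ = 0)
    (hE : E ∈ 𝒜) : lowerSInt H 𝒜L (σ (E ∩ K) ·) μ = lowerSInt H 𝒜L (σ E ·) μ :=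
  lowerSInt_congr_of_compl_null h𝒜L hμ (hσ.isBounded_range (h𝒜.inter_mem hE hK𝒜))
    (hσ.isBounded_range hE) hK hK0 fun i hi =>
      (hσ.isFAP i).inter_eq_of_eq_one h𝒜 hE hK𝒜 (hσ.eq_one hK𝒜 hi)

theorem lowerSInt_strategy_inter_eq_mul (h𝒜L : IsFieldOver H 𝒜L) (h𝒜 : IsSetField 𝒜)
    (hσ : IsStrategy 𝒜 H σ) (hμ : IsFAP 𝒜L μ) (hν : IsFAP 𝒜L ν) (hG : G ∈ 𝒜L) (hG𝒜 : G ∈ 𝒜)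
    (hF : F ∈ 𝒜) (hrel : ∀ B ∈ 𝒜L, μ (B ∩ G) = μ G * ν B) :
    lowerSInt H 𝒜L (σ (G ∩ F) ·) μ = μ G * lowerSInt H 𝒜L (σ F ·) ν :=
  lowerSInt_eq_mul h𝒜L hμ hν (hσ.isBounded_range (h𝒜.inter_mem hG𝒜 hF)) (hσ.isBounded_range hF)
    hG hrel
    (fun i hi => by
      rw [inter_comm]
      exact (hσ.isFAP i).inter_eq_of_eq_one h𝒜 hF hG𝒜 (hσ.eq_one hG𝒜 hi))
    fun _ hi => hσ.eq_zero h𝒜 (h𝒜.inter_mem hG𝒜 hF)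
      (hi.trans (compl_subset_compl.2 inter_subset_left))

theorem isFAP_lowerSInt_strategy (hH : IsPartition H) (h𝒜L : IsFieldOver H 𝒜L)
    (hσ : IsStrategy 𝒜 H σ) (hcont : ∀ F ∈ 𝒜, ALContinuous H 𝒜L (σ F ·)) (hμ : IsFAP 𝒜L μ) :
    IsFAP 𝒜 fun F => lowerSInt H 𝒜L (σ F ·) μ := by
  refine ⟨fun A hA => ⟨?_, ?_⟩, ?_, fun A hA B hB hAB => ?_⟩
  · exact le_lowerSInt h𝒜L hμ (hσ.isBounded_range hA) fun i => (hσ.isFAP i).nonneg hA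
  · exact lowerSInt_le h𝒜L hμ (hσ.isBounded_range hA).bddBelow fun i => ((hσ.isFAP i).1 A hA).2
  · simpa only [fun i => (hσ.isFAP i).2.1] using lowerSInt_const h𝒜L hμ 1
  · beta_reduce
    rw [show (σ (A ∪ B) ·) = (σ A ·) + (σ B ·) from funext fun i => (hσ.isFAP i).union hA hB hAB]
    exact lowerSInt_add_of_ALContinuous hH h𝒜L hμ (hcont A hA) (hcont B hB)

theorem lowerSInt_strategy_self (hH : IsPartition H) (h𝒜L : IsFieldOver H 𝒜L)
    (h𝒜 : IsSetField 𝒜) (hσ : IsStrategy 𝒜 H σ) (hL𝒜 : 𝒜L ⊆ 𝒜) (hF : F ∈ 𝒜) (i : ι) :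
    lowerSInt H 𝒜L (σ F ·) (σ · i) = σ F i := by
  have hμ : IsFAP 𝒜L (σ · i) := (hσ.isFAP i).of_subset hL𝒜
  have hHi := h𝒜L.2.1 i
  rw [lowerSInt_congr_of_compl_null (Y := fun _ => σ F i) h𝒜L hμ (hσ.isBounded_range hF)
      (isBounded_singleton.subset range_const_subset) hHi
      (hσ.eq_zero h𝒜 (h𝒜.compl_mem (hL𝒜 hHi)) (compl_compl (H i)).superset)
      fun j hj => by rw [hH.eq_of_subset hj],
    lowerSInt_const h𝒜L hμ]

end Disintegration

theorem statement14_general {Ω ι κ : Type*} [Nonempty Ω] (H : ι → Set Ω) (E : κ → Set Ω)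
    (𝒜L 𝒜E 𝒜 : Set (Set Ω))
    (hH : IsPartition H)
    (h𝒜L : IsFieldOver H 𝒜L)
    (h𝒜 : IsJointField H E 𝒜L 𝒜E 𝒜)
    (π : Set Ω → ℝ)
    (σ : Set Ω → ι → ℝ) (hσ : IsStrategy 𝒜 H σ)
    (hcont : ∀ F ∈ 𝒜, ALContinuous H 𝒜L fun i => σ F i)
    (π' : Set Ω → Set Ω → ℝ)
    (hπ' : ∃ P ∈ FCPSet 𝒜 𝒜L H π σ, ∀ B ∈ 𝒜L, ∀ K ∈ 𝒜L, K.Nonempty → π' B K = P B K)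
    (Pfd : Set Ω → Set Ω → ℝ)
    (hPfd : ∀ F K, Pfd F K = lowerSInt H 𝒜L (fun i => σ F i) fun B => π' B K) :
    (∀ E' ∈ 𝒜, ∀ K ∈ 𝒜L, K.Nonempty → Pfd E' K = Pfd (E' ∩ K) K) ∧
    (∀ K ∈ 𝒜L, K.Nonempty → IsFAP 𝒜 fun E' => Pfd E' K) ∧
    (∀ E' ∈ 𝒜, ∀ F ∈ 𝒜, ∀ K ∈ 𝒜L, K.Nonempty → E' ∩ K ∈ 𝒜L → (E' ∩ K).Nonempty →
      Pfd (E' ∩ F) K = Pfd E' K * Pfd F (E' ∩ K)) ∧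
    (∀ F ∈ 𝒜, Pfd F Set.univ = lowerSInt H 𝒜L (fun i => σ F i) π) ∧
    (∀ F ∈ 𝒜, ∀ i, Pfd F (H i) = σ F i) ∧
    (∀ B ∈ 𝒜L, ∀ K ∈ 𝒜L, K.Nonempty → Pfd B K = π' B K) := by
  obtain ⟨P, ⟨hP, hPπ, hPσ⟩, hπ'P⟩ := hπ'
  obtain ⟨h𝒜F, hL𝒜, -⟩ := h𝒜
  have hPK : ∀ K ∈ 𝒜L, K.Nonempty → IsFAP 𝒜L (P · K) := fun K hK hne =>
    (hP.isFAP (hL𝒜 hK) hne).of_subset hL𝒜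
  have hPfdP : ∀ F, ∀ K ∈ 𝒜L, K.Nonempty → Pfd F K = lowerSInt H 𝒜L (σ F ·) (P · K) :=
    fun F K hK hne => (hPfd F K).trans (lowerSInt_congr_measure fun B hB => hπ'P B hB K hK hne)
  have hC1 : ∀ E' ∈ 𝒜, ∀ K ∈ 𝒜L, K.Nonempty → Pfd E' K = Pfd (E' ∩ K) K := fun E' hE' K hK hne => by
    rw [hPfdP _ K hK hne, hPfdP _ K hK hne, lowerSInt_strategy_inter_of_compl_null h𝒜L h𝒜F hσ
      (hPK K hK hne) hK (hL𝒜 hK) (hP.compl_self h𝒜F (hL𝒜 hK) hne) hE']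
  have hPfdL : ∀ B ∈ 𝒜L, ∀ K ∈ 𝒜L, K.Nonempty → Pfd B K = P B K := fun B hB K hK hne => by
    rw [hPfdP B K hK hne, lowerSInt_strategy_of_mem h𝒜L h𝒜F hσ (hPK K hK hne) hB (hL𝒜 hB)]
  refine ⟨hC1, fun K hK hne => ?_, fun E' hE' F hF K hK hne hG hGne => ?_, fun F _ => ?_,
    fun F hF i => ?_, fun B hB K hK hne => (hPfdL B hB K hK hne).trans (hπ'P B hB K hK hne).symm⟩
  · simpa only [hPfdP _ K hK hne] using isFAP_lowerSInt_strategy hH h𝒜L hσ hcont (hPK K hK hne)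
  · rw [hC1 _ (h𝒜F.inter_mem hE' hF) K hK hne, inter_right_comm, hC1 E' hE' K hK hne,
      hPfdL _ hG K hK hne, hPfdP _ K hK hne, hPfdP F _ hG hGne]
    exact lowerSInt_strategy_inter_eq_mul h𝒜L h𝒜F hσ (hPK K hK hne) (hPK _ hG hGne) hG (hL𝒜 hG)
      hF fun B hB => hP.inter_eq_mul (hL𝒜 hG) (hL𝒜 hB) (hL𝒜 hK) hne inter_subset_right hGne
  · exact (hPfd F univ).trans (lowerSInt_congr_measure fun B hB =>
      (hπ'P B hB univ h𝒜L.1.1 univ_nonempty).trans (hPπ B hB))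
  · rw [hPfdP F _ (h𝒜L.2.1 i) (hH.1 i), lowerSInt_congr_measure fun B hB => hPσ B (hL𝒜 hB) i]
    exact lowerSInt_strategy_self hH h𝒜L h𝒜F hσ hL𝒜 hF i

/-- for `π̃^p ∈ 𝒫^p`, the function
`P̃^fd(F|K) = ∫ σ(F|Hᵢ) π̃^p(dHᵢ|K)` is a conditional probability on `𝒜 × 𝒜L⁰`
extending `{P^d, σ, π̃^p}`. -/
theorem statement14 {Ω ι κ : Type*} [Nonempty Ω] (H : ι → Set Ω) (E : κ → Set Ω)
    (𝒜L 𝒜E 𝒜 : Set (Set Ω))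
    (hH : IsPartition H) (hE : IsPartition E)
    (h𝒜L : IsFieldOver H 𝒜L) (h𝒜E : IsFieldOver E 𝒜E)
    (h𝒜 : IsJointField H E 𝒜L 𝒜E 𝒜)
    (π : Set Ω → ℝ) (hπ : IsFAP 𝒜L π)
    (σ : Set Ω → ι → ℝ) (hσ : IsStrategy 𝒜 H σ)
    (hcont : ∀ F ∈ 𝒜, ALContinuous H 𝒜L fun i => σ F i)
    (π' : Set Ω → Set Ω → ℝ)
    (hπ' : ∃ P ∈ FCPSet 𝒜 𝒜L H π σ, ∀ B ∈ 𝒜L, ∀ K ∈ 𝒜L, K.Nonempty → π' B K = P B K)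
    (Pfd : Set Ω → Set Ω → ℝ)
    (hPfd : ∀ F K, Pfd F K = lowerSInt H 𝒜L (fun i => σ F i) fun B => π' B K) :
    (∀ E' ∈ 𝒜, ∀ K ∈ 𝒜L, K.Nonempty → Pfd E' K = Pfd (E' ∩ K) K) ∧
    (∀ K ∈ 𝒜L, K.Nonempty → IsFAP 𝒜 fun E' => Pfd E' K) ∧
    (∀ E' ∈ 𝒜, ∀ F ∈ 𝒜, ∀ K ∈ 𝒜L, K.Nonempty → E' ∩ K ∈ 𝒜L → (E' ∩ K).Nonempty →
      Pfd (E' ∩ F) K = Pfd E' K * Pfd F (E' ∩ K)) ∧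
    (∀ F ∈ 𝒜, Pfd F Set.univ = lowerSInt H 𝒜L (fun i => σ F i) π) ∧
    (∀ F ∈ 𝒜, ∀ i, Pfd F (H i) = σ F i) ∧
    (∀ B ∈ 𝒜L, ∀ K ∈ 𝒜L, K.Nonempty → Pfd B K = π' B K) :=
  statement14_general H E 𝒜L 𝒜E 𝒜 hH h𝒜L h𝒜 π σ hσ hcont π' hπ' Pfd hPfd
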